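/- Let b_1,...,b_s ≥ 2 be pairwise coprime integers. For i = 1,...,s let x_i = Σ_{j≥1} x_{i,j} b_i^{−j} with digits x_{i,j} ∈ {0,...,b_i−1} and truncations [x_i]_r = Σ_{j=1}^r x_{i,j} b_i^{−j}. For a vector r = (r_1,...,r_s) of positive integers let B_r = ∏_{i=1}^s b_i^{r_i} and let M_{i,r} be an integer with M_{i,r}(B_r b_i^{−r_i}) ≡ 1 (mod b_i^{r_i}). Then for n ∈ ℕ₀: φ_{b_i}(n) ∈ [[x_i]_{r_i}, [x_i]_{r_i} + b_i^{−r_i}) for all i = 1,...,s if and only if n ≡ ẍ_r (mod B_r), where ẍ_r = Σ_{i=1}^s M_{i,r} B_r b_i^{−r_i} ẋ_{i,r_i} and ẋ_{i,r_i} = Σ_{j=1}^{r_i} x_{i,j} b_i^{j−1}. -/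

import Mathlib

open Finset

open scoped Classical

/-- The radical inverse function in base `b`: `φ_b(n) = Σ_j n_j b^{-j-1}`. -/
noncomputable def radInv (b n : ℕ) : ℝ :=
  ∑' j : ℕ, ((n / b ^ j % b : ℕ) : ℝ) / (b : ℝ) ^ (j + 1)

/-- The axis-parallel box `[0, y) = ∏_i [0, y_i)`. -/
def box {s : ℕ} (y : Fin s → ℝ) : Set (Fin s → ℝ) :=
  Set.univ.pi fun i => Set.Ico 0 (y i)

/-- The discrepancy function `Δ(y, (x_n)_{n=a}^{a+N-1})`. -/
noncomputable def disc {s : ℕ} (x : ℕ → Fin s → ℝ) (a N : ℕ) (y : Fin s → ℝ) : ℝ :=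
  ∑ n ∈ Finset.Ico a (a + N),
    ((box y).indicator (fun _ => (1 : ℝ)) (x n) - ∏ i, y i)

/-- The star discrepancy of `(x_n)_{n=a}^{a+N-1}`. -/
noncomputable def Dstar {s : ℕ} (x : ℕ → Fin s → ℝ) (a N : ℕ) : ℝ :=
  sSup {v : ℝ | ∃ y : Fin s → ℝ, (∀ i, y i ∈ Set.Ico (0 : ℝ) 1) ∧
    v = |disc x a N y| / (N : ℝ)}

/-- `(x_n)_{0 ≤ n < b^m}` is a `(t,m,s)`-net in base `b`. -/
def IsNet {s : ℕ} (b t m : ℕ) (x : ℕ → Fin s → ℝ) : Prop :=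
  (∀ n < b ^ m, ∀ i, x n i ∈ Set.Ico (0 : ℝ) 1) ∧
  ∀ d a : Fin s → ℕ, (∀ i, a i < b ^ d i) → (∑ i, d i) + t = m →
    ((Finset.range (b ^ m)).filter
      (fun n => ∀ i, x n i ∈ Set.Ico ((a i : ℝ) / b ^ d i) ((a i + 1 : ℝ) / b ^ d i))).card
      = b ^ t

/-- The `j`-th `b`-adic digit (`j ≥ 1`) of a real number `x ∈ [0,1)`. -/
noncomputable def bdigit (b : ℕ) (x : ℝ) (j : ℕ) : ℕ := (⌊x * (b : ℝ) ^ j⌋ % (b : ℤ)).toNat % b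

/-- The `b`-adic absolute valuation `‖x‖_b = b^{-(k+1)}` where the digits
`x_1, …, x_k` vanish and `x_{k+1} ≠ 0`; it is `0` when all digits vanish. -/
noncomputable def bval (b : ℕ) (x : ℝ) : ℝ :=
  if h : ∃ j, 1 ≤ j ∧ bdigit b x j ≠ 0 then
    (1 : ℝ) / (b : ℝ) ^ sInf {j | 1 ≤ j ∧ bdigit b x j ≠ 0}
  else 0

/-- The `b`-adic absolute valuation of a vector, `‖x‖_b = ∏_j ‖x^{(j)}‖_b`. -/
noncomputable def bvalVec {s : ℕ} (b : ℕ) (x : Fin s → ℝ) : ℝ := ∏ i, bval b (x i)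

/-- Digitwise subtraction modulo `b`: `x ⊖ σ`. -/
noncomputable def bsub (b : ℕ) (x σ : ℝ) : ℝ :=
  ∑' j : ℕ, (((bdigit b x (j + 1) + b - bdigit b σ (j + 1)) % b : ℕ) : ℝ) / (b : ℝ) ^ (j + 1)

/-- Digitwise addition modulo `b`: `x ⊕ σ`. -/
noncomputable def badd (b : ℕ) (x σ : ℝ) : ℝ :=
  ∑' j : ℕ, (((bdigit b x (j + 1) + bdigit b σ (j + 1)) % b : ℕ) : ℝ) / (b : ℝ) ^ (j + 1)

/-- A `b^m`-point set in `[0,1)^s` is `d`-admissible in base `b`. -/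
def IsAdmissible {s : ℕ} (b m : ℕ) (d : ℤ) (x : ℕ → Fin s → ℝ) : Prop :=
  ∀ k n : ℕ, k < n → n < b ^ m →
    bvalVec b (fun i => bsub b (x n i) (x k i)) > (b : ℝ) ^ (-((m : ℤ) + d))

/-- The two-dimensional Halton sequence in bases `2` and `3`. -/
noncomputable def H23 : ℕ → Fin 2 → ℝ := fun n => ![radInv 2 n, radInv 3 n]

/-- `ytil` is the quantity `ỹ_m` for the Halton sequence in bases `2` and `3`
(so that `τ₁ = 2`, `τ₂ = 1`). -/
def IsYtilde (m ytil : ℕ) : Prop :=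
  ytil < 2 ^ (2 * (m + 1)) * 3 ^ (m + 1) ∧
  ∃ M₁ M₂ : ℤ,
    M₁ * 3 ^ (m + 1) ≡ 1 [ZMOD (2 : ℤ) ^ (2 * (m + 1))] ∧
    M₂ * 2 ^ (2 * (m + 1)) ≡ 1 [ZMOD (3 : ℤ) ^ (m + 1)] ∧
    (ytil : ℤ) ≡ M₁ * 3 ^ (m + 1) * (∑ j ∈ Finset.Icc 1 (m + 1), (2 : ℤ) ^ (2 * j - 1))
        + M₂ * 2 ^ (2 * (m + 1)) * (∑ j ∈ Finset.Icc 1 (m + 1), (3 : ℤ) ^ (j - 1))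
      [ZMOD (2 : ℤ) ^ (2 * (m + 1)) * 3 ^ (m + 1)]

/-! Multiplying by `b ^ r` shifts the base-`b` expansion of the radical inverse:
`φ_b(n) b^r = ρ + φ_b(⌊n / b^r⌋)`, where `ρ` is the integer whose base-`b` digits are the first
`r` digits of `n` in reverse order, and `0 ≤ φ_b < 1`. So `φ_b(n) ∈ [a / b^r, (a + 1) / b^r)` iff
`ρ = a`, i.e. iff the first `r` digits of `n` are prescribed, i.e. iff `n ≡ ẋ (mod b^r)`.
For pairwise coprime moduli `b_i ^ r_i` these congruences combine into one modulo their product,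
and the choice of the `M_i` makes `ẍ` a simultaneous solution. -/

theorem Finset.sum_Icc_one_eq_sum_range {M : Type*} [AddCommMonoid M] (f : ℕ → M) (r : ℕ) :
    ∑ j ∈ Icc 1 r, f j = ∑ i ∈ range r, f (i + 1) := by
  rw [← Finset.Ico_add_one_right_eq_Icc, Finset.sum_Ico_eq_sum_range, Nat.add_sub_cancel]
  simp only [add_comm]

namespace Nat

theorem sum_range_mul_pow_lt {b r : ℕ} {d : ℕ → ℕ} (hd : ∀ i < r, d i < b) :
    ∑ i ∈ range r, d i * b ^ i < b ^ r := by
  induction r with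
  | zero => simp
  | succ r ih =>
    calc ∑ i ∈ range (r + 1), d i * b ^ i
        < b ^ r + d r * b ^ r := by
          rw [sum_range_succ]; exact Nat.add_lt_add_right (ih fun i hi => hd i (by omega)) _
      _ = (d r + 1) * b ^ r := by ring
      _ ≤ b ^ (r + 1) := by rw [pow_succ']; exact Nat.mul_le_mul_right _ (hd r (by omega))

theorem add_mul_inj_of_lt {b d e X Y : ℕ} (hd : d < b) (he : e < b) :
    d + b * X = e + b * Y ↔ d = e ∧ X = Y := by
  refine ⟨fun h => ?_, by rintro ⟨rfl, rfl⟩; rfl⟩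
  have hde : d = e := by
    simpa [Nat.add_mul_mod_self_left, Nat.mod_eq_of_lt hd, Nat.mod_eq_of_lt he]
      using congrArg (· % b) h
  subst hde
  exact ⟨rfl, Nat.eq_of_mul_eq_mul_left (by omega) (Nat.add_left_cancel h)⟩

theorem sum_range_mul_pow_inj {b r : ℕ} {d e : ℕ → ℕ} (hd : ∀ i < r, d i < b)
    (he : ∀ i < r, e i < b) :
    ∑ i ∈ range r, d i * b ^ i = ∑ i ∈ range r, e i * b ^ i ↔ ∀ i < r, d i = e i := by
  induction r generalizing d e with
  | zero => simp
  | succ r ih =>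
    have hsplit : ∀ f : ℕ → ℕ, ∑ i ∈ range (r + 1), f i * b ^ i
        = f 0 + b * ∑ i ∈ range r, f (i + 1) * b ^ i := fun f => by
      rw [sum_range_succ', mul_sum, pow_zero, mul_one, add_comm]
      exact congrArg _ (sum_congr rfl fun i _ => by ring)
    rw [hsplit, hsplit, add_mul_inj_of_lt (hd 0 (by omega)) (he 0 (by omega)),
      ih (fun i hi => hd _ (by omega)) (fun i hi => he _ (by omega)), Nat.forall_lt_succ_left]

theorem sum_range_mul_pow_sub_eq (b r : ℕ) (d : ℕ → ℕ) :
    ∑ i ∈ range r, d i * b ^ (r - 1 - i) = ∑ i ∈ range r, d (r - 1 - i) * b ^ i := by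
  rw [← sum_range_reflect]
  refine sum_congr rfl fun i hi => ?_
  rw [Nat.sub_sub_self (by simp at hi; omega)]

theorem sum_range_mul_pow_sub_lt {b r : ℕ} {d : ℕ → ℕ} (hd : ∀ i < r, d i < b) :
    ∑ i ∈ range r, d i * b ^ (r - 1 - i) < b ^ r := by
  rw [sum_range_mul_pow_sub_eq]
  exact sum_range_mul_pow_lt fun i _ => hd _ (by omega)

theorem sum_range_mul_pow_sub_inj {b r : ℕ} {d e : ℕ → ℕ} (hd : ∀ i < r, d i < b)
    (he : ∀ i < r, e i < b) :
    ∑ i ∈ range r, d i * b ^ (r - 1 - i) = ∑ i ∈ range r, e i * b ^ (r - 1 - i) ↔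
      ∀ i < r, d i = e i := by
  rw [sum_range_mul_pow_sub_eq, sum_range_mul_pow_sub_eq,
    sum_range_mul_pow_inj (fun i _ => hd _ (by omega)) (fun i _ => he _ (by omega))]
  refine ⟨fun h i hi => ?_, fun h i _ => h _ (by omega)⟩
  simpa [Nat.sub_sub_self (by omega : i ≤ r - 1)] using h (r - 1 - i) (by omega)

theorem mod_pow_eq_sum_digits (b r n : ℕ) :
    n % b ^ r = ∑ i ∈ range r, n / b ^ i % b * b ^ i := by
  induction r with
  | zero => simp [Nat.mod_one]
  | succ r ih => rw [sum_range_succ, ← ih, pow_succ, Nat.mod_mul]; ring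

end Nat

theorem natCast_add_mem_Ico_iff {R : Type*} [Ring R] [LinearOrder R] [IsStrictOrderedRing R]
    {A a : ℕ} {f : R} (hf0 : 0 ≤ f) (hf1 : f < 1) :
    (A : R) + f ∈ Set.Ico (a : R) (a + 1) ↔ A = a := by
  refine ⟨fun ⟨h1, h2⟩ => ?_, by rintro rfl; exact ⟨by simpa using hf0, by simpa using hf1⟩⟩
  have hA : (A : R) < a + 1 := (le_add_of_nonneg_right hf0).trans_lt h2
  have ha : (a : R) < A + 1 := h1.trans_lt (add_lt_add_right hf1 _)
  norm_cast at hA ha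
  omega

namespace Int

variable {ι : Type*} [Fintype ι]

theorem modEq_prod_iff {m : ι → ℤ} (hm : Pairwise fun i j => IsCoprime (m i) (m j)) {a b : ℤ} :
    a ≡ b [ZMOD ∏ i, m i] ↔ ∀ i, a ≡ b [ZMOD m i] := by
  simp only [Int.modEq_iff_dvd]
  exact ⟨fun h i => (dvd_prod_of_mem m (mem_univ i)).trans h, Fintype.prod_dvd_of_coprime hm⟩

theorem sum_mul_prod_erase_modEq [DecidableEq ι] {m M : ι → ℤ}
    (hM : ∀ i, M i * ∏ j ∈ univ.erase i, m j ≡ 1 [ZMOD m i]) (c : ι → ℤ) (i : ι) :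
    ∑ k, M k * (∏ j ∈ univ.erase k, m j) * c k ≡ c i [ZMOD m i] := by
  have hrest : ∑ k ∈ univ.erase i, M k * (∏ j ∈ univ.erase k, m j) * c k ≡ 0 [ZMOD m i] := by
    refine Int.modEq_zero_iff_dvd.2 (dvd_sum fun k hk => ?_)
    have hik : i ∈ univ.erase k := mem_erase.2 ⟨(ne_of_mem_erase hk).symm, mem_univ i⟩
    exact ((dvd_prod_of_mem m hik).mul_left _).mul_right _
  rw [← add_sum_erase _ _ (mem_univ i)]
  simpa using ((hM i).mul_right (c i)).add hrest

end Int

def revDigits (b r n : ℕ) : ℕ := ∑ i ∈ range r, n / b ^ i % b * b ^ (r - 1 - i)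

section RadicalInverse

variable {b : ℕ}

theorem revDigits_lt (hb : 0 < b) (r n : ℕ) : revDigits b r n < b ^ r :=
  Nat.sum_range_mul_pow_sub_lt fun _ _ => Nat.mod_lt _ hb

theorem summable_radInv (hb : 1 < b) (n : ℕ) :
    Summable fun j : ℕ => ((n / b ^ j % b : ℕ) : ℝ) / (b : ℝ) ^ (j + 1) := by
  refine summable_of_ne_finset_zero (s := range n) fun j hj => ?_
  have hn : n < b ^ j := (Nat.lt_pow_self hb).trans_le
    (Nat.pow_le_pow_right (by omega) (by simpa using hj))
  simp [Nat.div_eq_of_lt hn]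

theorem radInv_zero (b : ℕ) : radInv b 0 = 0 := by
  simp [radInv]

theorem radInv_nonneg (b n : ℕ) : 0 ≤ radInv b n :=
  tsum_nonneg fun _ => by positivity

theorem radInv_mul_pow (hb : 1 < b) (n r : ℕ) :
    radInv b n * (b : ℝ) ^ r = revDigits b r n + radInv b (n / b ^ r) := by
  rw [radInv, ← (summable_radInv hb n).sum_add_tsum_nat_add r, add_mul, radInv,
    ← tsum_mul_right]
  congr 1
  · push_cast [revDigits, sum_mul]
    refine sum_congr rfl fun j hj => ?_
    have hr : (b : ℝ) ^ r = (b : ℝ) ^ (j + 1) * (b : ℝ) ^ (r - 1 - j) := by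
      rw [← pow_add]; congr 1; simp at hj; omega
    rw [hr]
    field_simp
  · refine tsum_congr fun j => ?_
    rw [Nat.div_div_eq_div_mul, ← pow_add, add_comm j r, pow_add]
    field_simp
    ring

theorem radInv_lt_one (hb : 1 < b) (n : ℕ) : radInv b n < 1 := by
  have h := radInv_mul_pow hb n n
  rw [Nat.div_eq_of_lt (Nat.lt_pow_self hb), radInv_zero, add_zero] at h
  have hlt : (revDigits b n n : ℝ) < (b : ℝ) ^ n := by
    exact_mod_cast revDigits_lt (by omega) n n
  rw [← h] at hlt
  exact (mul_lt_iff_lt_one_left (by positivity)).mp hlt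

theorem radInv_mem_Ico_iff_revDigits_eq (hb : 1 < b) (r n a : ℕ) :
    radInv b n ∈ Set.Ico ((a : ℝ) / (b : ℝ) ^ r) ((a : ℝ) / (b : ℝ) ^ r + ((b : ℝ) ^ r)⁻¹) ↔
      revDigits b r n = a := by
  have hpos : (0 : ℝ) < (b : ℝ) ^ r := by positivity
  rw [← natCast_add_mem_Ico_iff (radInv_nonneg b _) (radInv_lt_one hb _), ← radInv_mul_pow hb,
    show (a : ℝ) / (b : ℝ) ^ r + ((b : ℝ) ^ r)⁻¹ = (a + 1) / (b : ℝ) ^ r by ring,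
    Set.mem_Ico, Set.mem_Ico, div_le_iff₀ hpos, lt_div_iff₀ hpos]

theorem radInv_mem_Ico_iff_intCast_modEq (hb : 1 < b) {r : ℕ} {x : ℕ → ℕ}
    (hx : ∀ j ∈ Icc 1 r, x j < b) (n : ℕ) :
    radInv b n ∈ Set.Ico (∑ j ∈ Icc 1 r, (x j : ℝ) / (b : ℝ) ^ j)
        ((∑ j ∈ Icc 1 r, (x j : ℝ) / (b : ℝ) ^ j) + ((b : ℝ) ^ r)⁻¹) ↔
      (n : ℤ) ≡ ∑ j ∈ Icc 1 r, (x j : ℤ) * (b : ℤ) ^ (j - 1) [ZMOD (b : ℤ) ^ r] := by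
  have hx' : ∀ i < r, x (i + 1) < b := fun i hi => hx _ (by simp; omega)
  have hdig : ∀ i < r, n / b ^ i % b < b := fun _ _ => Nat.mod_lt _ (by omega)
  have hleft : ∑ j ∈ Icc 1 r, (x j : ℝ) / (b : ℝ) ^ j
      = ((∑ i ∈ range r, x (i + 1) * b ^ (r - 1 - i) : ℕ) : ℝ) / (b : ℝ) ^ r := by
    rw [sum_Icc_one_eq_sum_range]
    push_cast
    rw [sum_div]
    refine sum_congr rfl fun i hi => ?_
    have hr : (b : ℝ) ^ r = (b : ℝ) ^ (i + 1) * (b : ℝ) ^ (r - 1 - i) := by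
      rw [← pow_add]; congr 1; simp at hi; omega
    rw [hr]
    field_simp
  have hright : ∑ j ∈ Icc 1 r, (x j : ℤ) * (b : ℤ) ^ (j - 1)
      = ((∑ i ∈ range r, x (i + 1) * b ^ i : ℕ) : ℤ) := by
    rw [sum_Icc_one_eq_sum_range]
    push_cast
    rfl
  rw [hleft, radInv_mem_Ico_iff_revDigits_eq hb, hright, revDigits,
    Nat.sum_range_mul_pow_sub_inj hdig hx', ← Nat.sum_range_mul_pow_inj hdig hx',
    ← Nat.mod_pow_eq_sum_digits, show (b : ℤ) ^ r = ((b ^ r : ℕ) : ℤ) by push_cast; rfl,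
    Int.natCast_modEq_iff, Nat.ModEq, Nat.mod_eq_of_lt (Nat.sum_range_mul_pow_lt hx')]

end RadicalInverse

theorem radInv_mem_iff_mod_crt_general (s : ℕ) (b : Fin s → ℕ) (hb : ∀ i, 2 ≤ b i)
    (hcop : ∀ i j, i ≠ j → Nat.Coprime (b i) (b j))
    (x : Fin s → ℕ → ℕ) (hx : ∀ i j, x i j < b i)
    (r : Fin s → ℕ)
    (M : Fin s → ℤ)
    (hM : ∀ i, M i * ∏ j ∈ Finset.univ.erase i, (b j : ℤ) ^ r j ≡ 1
      [ZMOD ((b i : ℤ) ^ r i)])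
    (n : ℕ) :
    (∀ i, radInv (b i) n ∈
        Set.Ico (∑ j ∈ Finset.Icc 1 (r i), (x i j : ℝ) / (b i : ℝ) ^ j)
          ((∑ j ∈ Finset.Icc 1 (r i), (x i j : ℝ) / (b i : ℝ) ^ j) + ((b i : ℝ) ^ r i)⁻¹)) ↔
      (n : ℤ) ≡ ∑ i, M i * (∏ j ∈ Finset.univ.erase i, (b j : ℤ) ^ r j) *
          (∑ j ∈ Finset.Icc 1 (r i), (x i j : ℤ) * (b i : ℤ) ^ (j - 1))
        [ZMOD (∏ i, (b i : ℤ) ^ r i)] := by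
  have hcop_pow : Pairwise fun i j => IsCoprime ((b i : ℤ) ^ r i) ((b j : ℤ) ^ r j) := fun i j hij =>
    (Nat.isCoprime_iff_coprime.2 (hcop i j hij)).pow
  rw [Int.modEq_prod_iff hcop_pow]
  refine forall_congr' fun i => ?_
  have hsol := Int.sum_mul_prod_erase_modEq hM
    (fun i => ∑ j ∈ Icc 1 (r i), (x i j : ℤ) * (b i : ℤ) ^ (j - 1)) i
  rw [radInv_mem_Ico_iff_intCast_modEq (hb i) fun j _ => hx i j]
  exact ⟨fun h => h.trans hsol.symm, fun h => h.trans hsol⟩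

/-- Lemma 4.2: simultaneous membership of the radical inverses in elementary
intervals is a single congruence modulo `B_r`, via the Chinese remainder theorem. -/
theorem radInv_mem_iff_mod_crt (s : ℕ) (hs : 1 ≤ s) (b : Fin s → ℕ) (hb : ∀ i, 2 ≤ b i)
    (hcop : ∀ i j, i ≠ j → Nat.Coprime (b i) (b j))
    (x : Fin s → ℕ → ℕ) (hx : ∀ i j, x i j < b i)
    (r : Fin s → ℕ) (hr : ∀ i, 1 ≤ r i)
    (M : Fin s → ℤ)
    (hM : ∀ i, M i * ∏ j ∈ Finset.univ.erase i, (b j : ℤ) ^ r j ≡ 1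
      [ZMOD ((b i : ℤ) ^ r i)])
    (n : ℕ) :
    (∀ i, radInv (b i) n ∈
        Set.Ico (∑ j ∈ Finset.Icc 1 (r i), (x i j : ℝ) / (b i : ℝ) ^ j)
          ((∑ j ∈ Finset.Icc 1 (r i), (x i j : ℝ) / (b i : ℝ) ^ j) + ((b i : ℝ) ^ r i)⁻¹)) ↔
      (n : ℤ) ≡ ∑ i, M i * (∏ j ∈ Finset.univ.erase i, (b j : ℤ) ^ r j) *
          (∑ j ∈ Finset.Icc 1 (r i), (x i j : ℤ) * (b i : ℤ) ^ (j - 1))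
        [ZMOD (∏ i, (b i : ℤ) ^ r i)] :=
  radInv_mem_iff_mod_crt_general s b hb hcop x hx r M hM n
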